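/- Let c ∈ ℝ and let φ, ρ : [0,π] → ℝ be continuously differentiable with φ(0) = φ(π) = ρ(0) = ρ(π) = 0. Set φ_n^D(x) := √(2/π) sin(nx) and ψ_n(x) := (n²+c²)^{−1/2} √(2/π)(n cos(nx) + c sin(nx)); define γ_n^D(f) := ∫₀^π f φ_n^D and γ_n^R(f) := ∫₀^π f ψ_n. For t > 0 set β_D(t) := ∑_{n=1}^∞ e^{−t(n²+c²)} γ_n^D(φ) γ_n^D(ρ). Then for every t > 0 the series converges, β_D is differentiable at t, and β_D'(t) = −∑_{n=1}^∞ e^{−t(n²+c²)} γ_n^R(φ' + cφ) γ_n^R(ρ' + cρ). -/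

import Mathlib

noncomputable section

/-- Fourier coefficient against the Dirichlet eigenfunction `√(2/π) sin(n x)` on `[0,π]`. -/
def gammaD (n : ℕ) (f : ℝ → ℝ) : ℝ :=
  ∫ x in (0 : ℝ)..Real.pi, f x * (Real.sqrt (2 / Real.pi) * Real.sin ((n : ℝ) * x))

/-- The Robin eigenfunctions `ψ_n = (n²+c²)^{-1/2} A φ_n^D` on `[0,π]`. -/
def robinEigen (c : ℝ) (n : ℕ) (x : ℝ) : ℝ :=
  (Real.sqrt ((n : ℝ) ^ 2 + c ^ 2))⁻¹ * Real.sqrt (2 / Real.pi) *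
    ((n : ℝ) * Real.cos ((n : ℝ) * x) + c * Real.sin ((n : ℝ) * x))

/-- Fourier coefficient against the Robin eigenfunction `ψ_n` on `[0,π]`. -/
def gammaR (c : ℝ) (n : ℕ) (f : ℝ → ℝ) : ℝ :=
  ∫ x in (0 : ℝ)..Real.pi, f x * robinEigen c n x

/-!
Integrating by parts against the Robin profile `n cos(nx) + c sin(nx)`, whose derivative is
`c (n cos(nx) + c sin(nx)) - (n² + c²) sin(nx)`, and using that `φ` vanishes at `0` and `π`,
gives `γ_n^R(φ' + c φ) = √(n² + c²) γ_n^D(φ)`. Hence the claimed derivative is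
`-∑ λ_n e^{-tλ_n} γ_n^D(φ) γ_n^D(ρ)`, the termwise derivative of the heat series. Termwise
differentiation is justified because the coefficients are bounded and, for `s > t/2`,
`λ_n e^{-sλ_n} ≤ (4/t) e^{-tλ_n/4} ≤ (4/t) e^{-tn/4}` is dominated by a geometric series.
-/

open Set Real intervalIntegral
open MeasureTheory (volume)

lemma ContDiffOn.hasDerivAt_deriv_of_mem_Ioo {f : ℝ → ℝ} {a b x : ℝ}
    (hf : ContDiffOn ℝ 1 f (Icc a b)) (hx : x ∈ Ioo a b) : HasDerivAt f (deriv f x) x :=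
  ((hf.differentiableOn one_ne_zero x (Ioo_subset_Icc_self hx)).differentiableAt
    (Icc_mem_nhds hx.1 hx.2)).hasDerivAt

lemma ContDiffOn.intervalIntegrable_deriv {f : ℝ → ℝ} {a b : ℝ} (hab : a < b)
    (hf : ContDiffOn ℝ 1 f (Icc a b)) : IntervalIntegrable (deriv f) volume a b := by
  have hcont := hf.continuousOn_derivWithin (uniqueDiffOn_Icc hab) le_rfl
  refine (hcont.intervalIntegrable_of_Icc hab.le).congr_uIoo fun x hx => ?_
  rw [uIoo_of_le hab.le] at hx
  exact derivWithin_of_mem_nhds (Icc_mem_nhds hx.1 hx.2)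

theorem integral_deriv_mul_eq_neg_of_eq_zero {f g g' : ℝ → ℝ} {a b : ℝ} (hab : a < b)
    (hf : ContDiffOn ℝ 1 f (Icc a b)) (ha : f a = 0) (hb : f b = 0)
    (hg : ∀ x, HasDerivAt g (g' x) x) (hg' : Continuous g') :
    ∫ x in a..b, deriv f x * g x = -∫ x in a..b, f x * g' x := by
  have hIcc : uIcc a b = Icc a b := uIcc_of_le hab.le
  have hIoo : Ioo (min a b) (max a b) = Ioo a b := by rw [min_eq_left hab.le, max_eq_right hab.le]
  have := integral_mul_deriv_eq_deriv_mul_of_hasDerivAt (u := g) (v := f)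
    (fun x _ => (hg x).continuousAt.continuousWithinAt) (hIcc ▸ hf.continuousOn)
    (fun x _ => hg x) (fun x hx => hf.hasDerivAt_deriv_of_mem_Ioo (hIoo ▸ hx))
    (hg'.intervalIntegrable (μ := volume) a b) (hf.intervalIntegrable_deriv hab)
  rw [ha, hb, mul_zero, mul_zero, sub_zero, zero_sub] at this
  simp only [mul_comm (deriv f _), mul_comm (f _)]
  linarith

theorem integral_deriv_add_mul_mul_cos_add_mul_sin {f : ℝ → ℝ} {a b : ℝ} (hab : a < b)
    (hf : ContDiffOn ℝ 1 f (Icc a b)) (ha : f a = 0) (hb : f b = 0) (c k : ℝ) :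
    ∫ x in a..b, (deriv f x + c * f x) * (k * cos (k * x) + c * sin (k * x))
      = (k ^ 2 + c ^ 2) * ∫ x in a..b, f x * sin (k * x) := by
  have hE : ∀ x, HasDerivAt (fun x => k * cos (k * x) + c * sin (k * x))
      (c * k * cos (k * x) - k ^ 2 * sin (k * x)) x := fun x => by
    have hkx := (hasDerivAt_id x).const_mul k
    simp only [mul_one, id] at hkx
    exact ((hkx.cos.const_mul k).add (hkx.sin.const_mul c)).congr_deriv (by ring)
  have hibp := integral_deriv_mul_eq_neg_of_eq_zero hab hf ha hb hE (by fun_prop)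
  have hfc : ContinuousOn f (uIcc a b) := uIcc_of_le hab.le ▸ hf.continuousOn
  have hint : ∀ {h : ℝ → ℝ}, Continuous h → IntervalIntegrable (fun x => f x * h x) volume a b :=
    fun hh => (hfc.mul hh.continuousOn).intervalIntegrable
  calc ∫ x in a..b, (deriv f x + c * f x) * (k * cos (k * x) + c * sin (k * x))
      = (∫ x in a..b, deriv f x * (k * cos (k * x) + c * sin (k * x)))
          + ∫ x in a..b, f x * (c * (k * cos (k * x) + c * sin (k * x))) := by
        rw [← integral_add]
        · congr 1 with x; ring
        · exact (hf.intervalIntegrable_deriv hab).mul_continuousOn (by fun_prop)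
        · exact hint (by fun_prop)
    _ = ∫ x in a..b, (k ^ 2 + c ^ 2) * (f x * sin (k * x)) := by
        rw [hibp, neg_add_eq_sub, ← integral_sub (hint (by fun_prop)) (hint (by fun_prop))]
        congr 1 with x; ring
    _ = (k ^ 2 + c ^ 2) * ∫ x in a..b, f x * sin (k * x) := integral_const_mul _ _

theorem gammaR_deriv_add_mul {f : ℝ → ℝ} (hf : ContDiffOn ℝ 1 f (Icc 0 π))
    (h0 : f 0 = 0) (hπ : f π = 0) (c : ℝ) (n : ℕ) :
    gammaR c n (fun x => deriv f x + c * f x) = √((n : ℝ) ^ 2 + c ^ 2) * gammaD n f := by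
  have hR : gammaR c n (fun x => deriv f x + c * f x) = (√((n : ℝ) ^ 2 + c ^ 2))⁻¹ * √(2 / π) *
      ∫ x in (0 : ℝ)..π, (deriv f x + c * f x) * (n * cos (n * x) + c * sin (n * x)) := by
    rw [gammaR, ← integral_const_mul]
    congr 1 with x
    rw [robinEigen]
    ring
  have hD : gammaD n f = √(2 / π) * ∫ x in (0 : ℝ)..π, f x * sin (n * x) := by
    rw [gammaD, ← integral_const_mul]
    congr 1 with x
    ring
  have hsqrt : (√((n : ℝ) ^ 2 + c ^ 2))⁻¹ * ((n : ℝ) ^ 2 + c ^ 2) = √((n : ℝ) ^ 2 + c ^ 2) := by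
    rw [← div_eq_inv_mul, div_sqrt]
  rw [hR, hD, integral_deriv_add_mul_mul_cos_add_mul_sin pi_pos hf h0 hπ]
  linear_combination √(2 / π) * (∫ x in (0 : ℝ)..π, f x * sin (n * x)) * hsqrt

lemma abs_gammaD_le {f : ℝ → ℝ} {M : ℝ} (hM : ∀ x ∈ Icc 0 π, ‖f x‖ ≤ M) (n : ℕ) :
    |gammaD n f| ≤ M * √(2 / π) * π := by
  have hbound : ∀ x ∈ uIoc 0 π, ‖f x * (√(2 / π) * sin (n * x))‖ ≤ M * √(2 / π) := by
    intro x hx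
    rw [uIoc_of_le pi_pos.le] at hx
    rw [norm_mul, norm_mul, norm_of_nonneg (sqrt_nonneg _), Real.norm_eq_abs (sin _)]
    have hM0 : 0 ≤ M := (norm_nonneg _).trans (hM 0 ⟨le_rfl, pi_pos.le⟩)
    calc ‖f x‖ * (√(2 / π) * |sin (n * x)|) ≤ M * (√(2 / π) * 1) := by
          gcongr
          · exact hM x (Ioc_subset_Icc_self hx)
          · exact abs_sin_le_one _
      _ = M * √(2 / π) := by rw [mul_one]
  simpa [gammaD, abs_of_pos pi_pos] using norm_integral_le_of_norm_le_const hbound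

section HeatSeries

variable {μ a : ℕ → ℝ} {C : ℝ}

lemma exp_neg_mul_le_pow {s m : ℝ} {n : ℕ} (hs : 0 ≤ s) (hn : (n : ℝ) ≤ m) :
    exp (-s * m) ≤ exp (-s) ^ n := by
  rw [← exp_nat_mul]
  exact exp_le_exp.2 (by nlinarith)

lemma summable_exp_neg_pow {s : ℝ} (hs : 0 < s) : Summable fun n : ℕ => exp (-s) ^ n :=
  summable_geometric_of_lt_one (exp_nonneg _) (exp_lt_one_iff.2 (neg_lt_zero.2 hs))

lemma summable_exp_neg_mul_mul (hμ : ∀ n : ℕ, (n : ℝ) ≤ μ n) (ha : ∀ n, |a n| ≤ C) {s : ℝ}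
    (hs : 0 < s) : Summable fun n => exp (-s * μ n) * a n :=
  .of_norm_bounded ((summable_exp_neg_pow hs).mul_right C) fun n => by
    rw [norm_mul, norm_of_nonneg (exp_pos _).le, Real.norm_eq_abs]
    exact mul_le_mul (exp_neg_mul_le_pow hs.le (hμ n)) (ha n) (abs_nonneg _) (by positivity)

lemma mul_exp_neg_two_mul_le {s x : ℝ} (hs : 0 < s) :
    x * exp (-(2 * s) * x) ≤ s⁻¹ * exp (-s * x) := by
  have he := exp_pos (-s * x)
  have hle : s * x * exp (-s * x) ≤ 1 :=
    calc s * x * exp (-s * x) ≤ exp (s * x) * exp (-s * x) := by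
          gcongr
          linarith [add_one_le_exp (s * x)]
      _ = 1 := by rw [← exp_add]; simp
  rw [show -(2 * s) * x = -s * x + -s * x by ring, exp_add, le_inv_mul_iff₀ hs]
  nlinarith [mul_le_mul_of_nonneg_right hle he.le]

lemma hasDerivAt_exp_neg_mul_mul (m b y : ℝ) :
    HasDerivAt (fun s => exp (-s * m) * b) (-(exp (-y * m) * (m * b))) y :=
  (((hasDerivAt_neg y).mul_const m).exp.mul_const b).congr_deriv (by ring)

lemma norm_exp_neg_mul_mul_le (hμ : ∀ n : ℕ, (n : ℝ) ≤ μ n) (ha : ∀ n, |a n| ≤ C) {t y : ℝ}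
    (ht : 0 < t) (hy : t / 2 < y) (n : ℕ) :
    ‖-(exp (-y * μ n) * (μ n * a n))‖ ≤ (t / 4)⁻¹ * C * exp (-(t / 4)) ^ n := by
  have hμ0 : 0 ≤ μ n := (Nat.cast_nonneg n).trans (hμ n)
  have hdecay : μ n * exp (-y * μ n) ≤ (t / 4)⁻¹ * exp (-(t / 4)) ^ n :=
    calc μ n * exp (-y * μ n) ≤ μ n * exp (-(2 * (t / 4)) * μ n) := by
          gcongr
          nlinarith
      _ ≤ (t / 4)⁻¹ * exp (-(t / 4) * μ n) := mul_exp_neg_two_mul_le (by positivity)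
      _ ≤ (t / 4)⁻¹ * exp (-(t / 4)) ^ n := by
          gcongr
          exact exp_neg_mul_le_pow (by positivity) (hμ n)
  rw [norm_neg, norm_mul, norm_mul, norm_of_nonneg (exp_pos _).le, norm_of_nonneg hμ0,
    Real.norm_eq_abs]
  calc exp (-y * μ n) * (μ n * |a n|) = μ n * exp (-y * μ n) * |a n| := by ring
    _ ≤ (t / 4)⁻¹ * exp (-(t / 4)) ^ n * C :=
        mul_le_mul hdecay (ha n) (abs_nonneg _) (by positivity)
    _ = (t / 4)⁻¹ * C * exp (-(t / 4)) ^ n := by ring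

theorem hasDerivAt_tsum_exp_neg_mul_mul (hμ : ∀ n : ℕ, (n : ℝ) ≤ μ n) (ha : ∀ n, |a n| ≤ C)
    {t : ℝ} (ht : 0 < t) :
    HasDerivAt (fun s => ∑' n, exp (-s * μ n) * a n)
      (-∑' n, exp (-t * μ n) * (μ n * a n)) t := by
  have hderiv := hasDerivAt_tsum_of_isPreconnected
    ((summable_exp_neg_pow (s := t / 4) (by positivity)).mul_left ((t / 4)⁻¹ * C))
    isOpen_Ioi isPreconnected_Ioi (fun n y _ => hasDerivAt_exp_neg_mul_mul (μ n) (a n) y)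
    (fun n _ hy => norm_exp_neg_mul_mul_le hμ ha ht hy n) (half_lt_self ht)
    (summable_exp_neg_mul_mul hμ ha ht) (half_lt_self ht)
  rwa [tsum_neg] at hderiv

end HeatSeries

theorem dirichlet_heat_content_deriv_robin (c : ℝ) (φ ρ : ℝ → ℝ)
    (hφ : ContDiffOn ℝ 1 φ (Set.Icc 0 Real.pi)) (hρ : ContDiffOn ℝ 1 ρ (Set.Icc 0 Real.pi))
    (hφ0 : φ 0 = 0) (hφπ : φ Real.pi = 0) (hρ0 : ρ 0 = 0) (hρπ : ρ Real.pi = 0) :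
    ∀ t : ℝ, 0 < t →
      (Summable fun n : ℕ =>
        Real.exp (-t * (((n : ℝ) + 1) ^ 2 + c ^ 2)) *
          gammaD (n + 1) φ * gammaD (n + 1) ρ) ∧
      HasDerivAt
        (fun s : ℝ => ∑' n : ℕ,
          Real.exp (-s * (((n : ℝ) + 1) ^ 2 + c ^ 2)) *
            gammaD (n + 1) φ * gammaD (n + 1) ρ)
        (-∑' n : ℕ,
          Real.exp (-t * (((n : ℝ) + 1) ^ 2 + c ^ 2)) *
            gammaR c (n + 1) (fun x => deriv φ x + c * φ x) *
            gammaR c (n + 1) (fun x => deriv ρ x + c * ρ x))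
        t := by
  intro t ht
  obtain ⟨Mφ, hMφ⟩ := isCompact_Icc.exists_bound_of_continuousOn hφ.continuousOn
  obtain ⟨Mρ, hMρ⟩ := isCompact_Icc.exists_bound_of_continuousOn hρ.continuousOn
  have hμ : ∀ n : ℕ, (n : ℝ) ≤ ((n : ℝ) + 1) ^ 2 + c ^ 2 := fun n => by
    nlinarith [sq_nonneg c, sq_nonneg (n : ℝ)]
  have ha : ∀ n : ℕ, |gammaD (n + 1) φ * gammaD (n + 1) ρ|
      ≤ Mφ * √(2 / π) * π * (Mρ * √(2 / π) * π) := fun n => by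
    rw [abs_mul]
    exact mul_le_mul (abs_gammaD_le hMφ _) (abs_gammaD_le hMρ _) (abs_nonneg _)
      ((abs_nonneg _).trans (abs_gammaD_le hMφ 0))
  have hcoeff : ∀ n : ℕ, gammaR c (n + 1) (fun x => deriv φ x + c * φ x) *
      gammaR c (n + 1) (fun x => deriv ρ x + c * ρ x)
        = (((n : ℝ) + 1) ^ 2 + c ^ 2) * (gammaD (n + 1) φ * gammaD (n + 1) ρ) := fun n => by
    rw [gammaR_deriv_add_mul hφ hφ0 hφπ, gammaR_deriv_add_mul hρ hρ0 hρπ, mul_mul_mul_comm,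
      mul_self_sqrt (by positivity)]
    push_cast
    ring
  simp only [mul_assoc, hcoeff]
  exact ⟨summable_exp_neg_mul_mul hμ ha ht, hasDerivAt_tsum_exp_neg_mul_mul hμ ha ht⟩
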